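/- In the subset automaton for L_n* described below, every subset of the form {0} ∪ S with S ⊆ {1,…,n−1} is reachable from the initial state {s}, and every nonempty subset S ⊆ {1,…,n−2} is reachable. -/

import Mathlib

/-!
Identify a set of non-initial states with a subset of `Fin n`. On such sets `a` acts as the
cycle `π = (1 … n-1)` and `b` as the transposition `(0 1)`, and after either letter `0` is added
whenever the result contains `n - 1`. So `a` merely rotates a set containing `0`, and `b` turns
`{0} ∪ T` into `{1} ∪ T` when `T ⊆ {2, …, n-2}`.

Induct on `|S|`. A nonempty `S ⊆ {1, …, n-2}` is `π^k ({1} ∪ T)`, where `k = min S - 1` and no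
element reaches `n - 2` during these rotations, and `{1} ∪ T = ({0} ∪ T) b` with `|T| < |S|`.
Unless `S = {1, …, n-1}` (which is `{0, 2, …, n-1} b`), some `q ∈ S` has `π q ∉ S`, so a rotation
`U` of `S` contains `n - 2` but not `n - 1`; then `{0} ∪ π U = U a`, and `{0} ∪ S` is a rotation
of it.
-/

namespace StarSubsetAutomaton

variable {n : ℕ}

def rot (q : Fin n) : Fin n :=
  if hq : q.val = 0 then q
  else if h : q.val + 1 < n then ⟨q.val + 1, h⟩
  else ⟨1, by have := q.isLt; omega⟩

lemma rot_of_val_eq_zero {q : Fin n} (hq : q.val = 0) : rot q = q := dif_pos hq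

lemma val_rot {q : Fin n} (hq : q.val ≠ 0) :
    (rot q).val = if q.val + 1 < n then q.val + 1 else 1 := by
  rw [rot, dif_neg hq]; split_ifs <;> rfl

lemma rot_eq_iff {r q : Fin n} :
    rot r = q ↔ (r.val = 0 ∧ q.val = 0) ∨ (1 ≤ r.val ∧ r.val ≤ n - 2 ∧ q.val = r.val + 1) ∨
      (r.val = n - 1 ∧ q.val = 1) := by
  have := r.isLt
  unfold rot
  split_ifs <;> simp only [Fin.ext_iff] <;> omega

lemma rot_injective : Function.Injective (rot : Fin n → Fin n) := by
  intro a b h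
  have ha := a.isLt; have hb := b.isLt
  unfold rot at h
  split_ifs at h <;> simp only [Fin.ext_iff] at h ⊢ <;> omega

lemma val_iterate_rot {q : Fin n} (hq : q.val ≠ 0) {k : ℕ} (hk : q.val + k < n) :
    (rot^[k] q).val = q.val + k := by
  induction k with
  | zero => rfl
  | succ k ih =>
    rw [Function.iterate_succ_apply', val_rot (by omega), ih (by omega), if_pos (by omega)]
    rfl

lemma iterate_rot_eq {x y : Fin n} (hx : x.val ≠ 0) (hy : y.val ≠ 0) :
    rot^[n - x.val + y.val - 1] x = y := by
  have hxn := x.isLt; have hyn := y.isLt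
  have hlast : (rot^[n - 1 - x.val] x).val = n - 1 := by
    rw [val_iterate_rot hx (by omega)]; omega
  have hone : (rot (rot^[n - 1 - x.val] x)).val = 1 := by
    rw [val_rot (by omega), if_neg (by omega)]
  rw [show n - x.val + y.val - 1 = (y.val - 1) + 1 + (n - 1 - x.val) by omega,
    Function.iterate_add_apply, Function.iterate_add_apply, Function.iterate_one]
  ext
  rw [val_iterate_rot (by omega) (by omega), hone]
  omega

lemma iterate_rot_sub_one : rot^[n - 1] = (id : Fin n → Fin n) := by
  funext q
  by_cases hq : q.val = 0
  · exact Function.iterate_fixed (rot_of_val_eq_zero hq) _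
  · simpa [show n - q.val + q.val - 1 = n - 1 by omega] using iterate_rot_eq hq hq

lemma val_iterate_rot_sub {q : Fin n} {k : ℕ} (hk : k < q.val) :
    (rot^[n - 1 - k] q).val = q.val - k := by
  have := q.isLt
  have h := iterate_rot_eq (x := q) (y := ⟨q.val - k, by omega⟩) (by omega) (by simp only; omega)
  rw [show n - q.val + (q.val - k) - 1 = n - 1 - k by omega] at h
  rw [h]

lemma exists_mem_rot_notMem {S : Set (Fin n)} {x y : Fin n} (hx : x ∈ S) (hx0 : x.val ≠ 0)
    (hy : y.val ≠ 0) (hyS : y ∉ S) : ∃ q ∈ S, rot q ∉ S := by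
  by_contra! h
  exact hyS (iterate_rot_eq hx0 hy ▸ Set.MapsTo.iterate h _ hx)

variable [NeZero n]

def stepA (X : Set (Fin n)) : Set (Fin n) :=
  rot '' X ∪ {q | q = 0 ∧ ∃ r ∈ X, r.val = n - 2}

def stepB (X : Set (Fin n)) : Set (Fin n) :=
  Equiv.swap 0 1 '' X ∪ {q | q = 0 ∧ ∃ r ∈ X, r.val = n - 1}

/-- `{0}` is the image of the initial set `{s}` under `a`. -/
inductive Reachable : Set (Fin n) → Prop
  | zero : Reachable {0}
  | stepA {X : Set (Fin n)} : Reachable X → Reachable (stepA X)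
  | stepB {X : Set (Fin n)} : Reachable X → Reachable (stepB X)

lemma rot_zero : rot (0 : Fin n) = 0 := rot_of_val_eq_zero rfl

lemma stepA_of_zero_mem {X : Set (Fin n)} (h : 0 ∈ X) : stepA X = rot '' X :=
  Set.union_eq_left.2 fun _ hq => hq.1 ▸ ⟨0, h, rot_zero⟩

lemma stepA_of_forall_ne {X : Set (Fin n)} (h : ∀ r ∈ X, r.val ≠ n - 2) : stepA X = rot '' X :=
  Set.union_eq_left.2 fun _ ⟨_, r, hr, hr'⟩ => absurd hr' (h r hr)

lemma stepA_of_mem {X : Set (Fin n)} {r : Fin n} (hr : r ∈ X) (hr' : r.val = n - 2) :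
    stepA X = insert 0 (rot '' X) := by
  rw [stepA, Set.insert_eq, Set.union_comm]
  congr 1
  ext q
  exact ⟨fun h => h.1, fun h => ⟨h, r, hr, hr'⟩⟩

lemma val_one_of_two_le (hn : 2 ≤ n) : (1 : Fin n).val = 1 := by
  rw [Fin.val_one', Nat.mod_eq_of_lt hn]

lemma swap_eq_iff (hn : 2 ≤ n) {r q : Fin n} :
    Equiv.swap 0 1 r = q ↔ (r.val = 0 ∧ q.val = 1) ∨ (r.val = 1 ∧ q.val = 0) ∨
      (2 ≤ r.val ∧ q = r) := by
  have h1 := val_one_of_two_le hn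
  rw [Equiv.swap_apply_def]
  split_ifs <;> simp only [Fin.ext_iff, Fin.val_zero, h1] at * <;> omega

lemma mem_stepA_iff {X : Set (Fin n)} {q : Fin n} :
    q ∈ stepA X ↔ ∃ r ∈ X, (r.val = 0 ∧ q.val = 0) ∨
      (1 ≤ r.val ∧ r.val ≤ n - 2 ∧ q.val = r.val + 1) ∨
      (r.val = n - 2 ∧ q.val = 0) ∨ (r.val = n - 1 ∧ q.val = 1) := by
  simp only [stepA, Set.mem_union, Set.mem_image, rot_eq_iff]
  simp only [Set.mem_ofPred_eq, Fin.ext_iff, Fin.val_zero]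
  constructor
  · rintro (⟨r, hr, h⟩ | ⟨hq, r, hr, h⟩)
    · exact ⟨r, hr, by omega⟩
    · exact ⟨r, hr, by omega⟩
  · rintro ⟨r, hr, h⟩
    by_cases h' : r.val = n - 2 ∧ q.val = 0
    · exact Or.inr ⟨h'.2, r, hr, h'.1⟩
    · exact Or.inl ⟨r, hr, by omega⟩

lemma mem_stepB_iff (hn : 3 ≤ n) {X : Set (Fin n)} {q : Fin n} :
    q ∈ stepB X ↔ ∃ r ∈ X, (r.val = 0 ∧ q.val = 1) ∨ (r.val = 1 ∧ q.val = 0) ∨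
      (2 ≤ r.val ∧ r.val ≤ n - 2 ∧ q.val = r.val) ∨
      (r.val = n - 1 ∧ (q.val = n - 1 ∨ q.val = 0)) := by
  simp only [stepB, Set.mem_union, Set.mem_image, swap_eq_iff (by omega : 2 ≤ n)]
  simp only [Set.mem_ofPred_eq, Fin.ext_iff, Fin.val_zero]
  constructor
  · rintro (⟨r, hr, h⟩ | ⟨hq, r, hr, h⟩)
    · exact ⟨r, hr, by omega⟩
    · exact ⟨r, hr, by omega⟩
  · rintro ⟨r, hr, h⟩
    by_cases h' : r.val = n - 1 ∧ q.val = 0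
    · exact Or.inr ⟨h'.2, r, hr, h'.1⟩
    · exact Or.inl ⟨r, hr, by omega⟩

lemma stepB_insert_zero (hn : 3 ≤ n) {T : Set (Fin n)}
    (hT : ∀ q ∈ T, 2 ≤ q.val ∧ q.val ≤ n - 2) : stepB (insert 0 T) = insert 1 T := by
  have h1 := val_one_of_two_le (by omega : 2 ≤ n)
  have hfix : Set.EqOn (Equiv.swap 0 1) id T := fun q hq =>
    Equiv.swap_apply_of_ne_of_ne (by rintro rfl; simpa using hT 0 hq)
      (by rintro rfl; have := hT 1 hq; omega)
  have hextra : {q : Fin n | q = 0 ∧ ∃ r ∈ insert 0 T, r.val = n - 1} = ∅ := by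
    refine Set.eq_empty_of_forall_notMem fun q ⟨_, r, hr, hr'⟩ => ?_
    rcases hr with rfl | hr
    · simp at hr'; omega
    · have := hT r hr; omega
  rw [stepB, Set.image_insert_eq, Equiv.swap_apply_left, hfix.image_eq_self, hextra,
    Set.union_empty]

lemma stepB_insert_zero_two_le (hn : 3 ≤ n) :
    stepB (insert 0 {q : Fin n | 2 ≤ q.val}) = Set.univ := by
  refine Set.eq_univ_of_forall fun q => (mem_stepB_iff hn).2 ?_
  have := q.isLt
  by_cases hq0 : q.val = 0
  · exact ⟨⟨n - 1, by omega⟩, Or.inr (by simp only [Set.mem_ofPred_eq]; omega), by simp [hq0]⟩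
  by_cases hq1 : q.val = 1
  · exact ⟨0, Or.inl rfl, by simp [hq1]⟩
  · exact ⟨q, Or.inr (by simp only [Set.mem_ofPred_eq]; omega), by omega⟩

lemma iterate_rot_zero (k : ℕ) : rot^[k] (0 : Fin n) = 0 := Function.iterate_fixed rot_zero k

lemma zero_mem_iterate_rot_image {X : Set (Fin n)} (h0 : 0 ∈ X) (k : ℕ) :
    0 ∈ rot^[k] '' X :=
  ⟨0, h0, iterate_rot_zero k⟩

lemma Reachable.image_iterate_rot_of_zero_mem {X : Set (Fin n)} (h : Reachable X) (h0 : 0 ∈ X)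
    (k : ℕ) : Reachable (rot^[k] '' X) := by
  induction k with
  | zero => simpa using h
  | succ k ih =>
    rw [Function.iterate_succ', Set.image_comp,
      ← stepA_of_zero_mem (zero_mem_iterate_rot_image h0 k)]
    exact ih.stepA

lemma Reachable.of_image_iterate_rot (hn : 2 ≤ n) {X : Set (Fin n)} {k : ℕ}
    (h : Reachable (rot^[k] '' X)) (h0 : 0 ∈ X) : Reachable X := by
  have := h.image_iterate_rot_of_zero_mem (zero_mem_iterate_rot_image h0 k) ((n - 2) * k)
  have hk : (n - 2) * k + k = (n - 1) * k := by rw [← Nat.succ_mul]; congr 1; omega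
  rwa [← Set.image_comp, ← Function.iterate_add, hk, Function.iterate_mul, iterate_rot_sub_one,
    Function.iterate_id, Set.image_id] at this

lemma Reachable.image_iterate_rot {X : Set (Fin n)} {k : ℕ} (h : Reachable X)
    (hX : ∀ q ∈ X, q.val ≠ 0 ∧ q.val + k + 2 ≤ n) : Reachable (rot^[k] '' X) := by
  induction k with
  | zero => simpa using h
  | succ k ih =>
    have hne : ∀ r ∈ rot^[k] '' X, r.val ≠ n - 2 := by
      rintro _ ⟨q, hq, rfl⟩
      have := hX q hq
      rw [val_iterate_rot this.1 (by omega)]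
      omega
    rw [Function.iterate_succ', Set.image_comp, ← stepA_of_forall_ne hne]
    exact (ih fun q hq => ⟨(hX q hq).1, by have := (hX q hq).2; omega⟩).stepA

lemma reachable_of_nonempty_of_forall_ncard_lt (hn : 3 ≤ n) {S : Set (Fin n)}
    (hne : S.Nonempty) (hS : ∀ q ∈ S, 1 ≤ q.val ∧ q.val ≤ n - 2)
    (ih : ∀ T : Set (Fin n), (∀ q ∈ T, q.val ≠ 0) → T.ncard < S.ncard → Reachable (insert 0 T)) :
    Reachable S := by
  obtain ⟨x, hx, hmin⟩ := S.exists_min_image Fin.val S.toFinite hne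
  set k := x.val - 1
  have hval : ∀ q ∈ S, (rot^[n - 1 - k] q).val = q.val - k := fun q hq =>
    val_iterate_rot_sub (by have := hmin q hq; have := hS x hx; omega)
  set X := rot^[n - 1 - k] '' S
  have h1X : 1 ∈ X := by
    refine ⟨x, hx, Fin.ext ?_⟩
    rw [hval x hx, val_one_of_two_le (by omega)]
    have := hS x hx
    omega
  have hT : ∀ q ∈ X \ {1}, 2 ≤ q.val ∧ q.val ≤ n - 2 := by
    rintro _ ⟨⟨q, hq, rfl⟩, hq1⟩
    have h1 : rot^[n - 1 - k] q ≠ 1 := hq1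
    rw [Ne, Fin.ext_iff, val_one_of_two_le (by omega), hval q hq] at h1
    rw [hval q hq]
    have := hmin q hq; have := hS q hq
    omega
  have hX : Reachable X := by
    have hlt : (X \ {1}).ncard < S.ncard := by
      rw [← Set.ncard_image_of_injective S (rot_injective.iterate (n - 1 - k))]
      exact Set.ncard_sdiff_singleton_lt_of_mem h1X
    have := (ih _ (fun q hq => by have := hT q hq; omega) hlt).stepB
    rwa [stepB_insert_zero hn hT, Set.insert_sdiff_singleton, Set.insert_eq_of_mem h1X] at this
  have := hX.image_iterate_rot (k := k) <| by
    rintro _ ⟨q, hq, rfl⟩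
    rw [hval q hq]
    have := hmin q hq; have := hS q hq
    omega
  rwa [← Set.image_comp, ← Function.iterate_add, show k + (n - 1 - k) = n - 1 by omega,
    iterate_rot_sub_one, Set.image_id] at this

lemma reachable_insert_zero_of_rot_notMem (hn : 3 ≤ n) {S : Set (Fin n)}
    (hS : ∀ q ∈ S, q.val ≠ 0) {q : Fin n} (hq : q ∈ S) (hrq : rot q ∉ S)
    (ih : ∀ T : Set (Fin n), (∀ q ∈ T, q.val ≠ 0) → T.ncard < S.ncard → Reachable (insert 0 T)) :
    Reachable (insert 0 S) := by
  set k := n - q.val + (n - 2) - 1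
  have hkq : (rot^[k] q).val = n - 2 := by
    rw [iterate_rot_eq (y := ⟨n - 2, by omega⟩) (hS q hq) (by simp only; omega)]
  have hinj := (rot_injective (n := n)).iterate k
  have hU : ∀ u ∈ rot^[k] '' S, 1 ≤ u.val ∧ u.val ≤ n - 2 := by
    rintro _ ⟨r, hr, rfl⟩
    have h0 : rot^[k] r ≠ 0 := fun h =>
      hS r hr (by rw [hinj (h.trans (iterate_rot_zero k).symm), Fin.val_zero])
    have hlast : rot^[k] r ≠ rot^[k] (rot q) := fun h => hrq (hinj h ▸ hr)
    rw [← Function.iterate_succ_apply, Function.iterate_succ_apply', Ne, Fin.ext_iff,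
      val_rot (by omega), hkq, if_pos (by omega)] at hlast
    rw [Ne, Fin.ext_iff, Fin.val_zero] at h0
    have := (rot^[k] r).isLt
    omega
  have hreach := (reachable_of_nonempty_of_forall_ncard_lt hn
    ((Set.nonempty_of_mem hq).image _) hU (by rwa [Set.ncard_image_of_injective _ hinj])).stepA
  rw [stepA_of_mem (Set.mem_image_of_mem _ hq) hkq, ← Set.image_comp, ← Function.iterate_succ',
    ← iterate_rot_zero (k + 1), ← Set.image_insert_eq] at hreach
  exact hreach.of_image_iterate_rot (by omega) (Set.mem_insert _ _)

lemma reachable_insert_zero_of_forall_ncard_lt (hn : 3 ≤ n) {S : Set (Fin n)}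
    (hS : ∀ q ∈ S, q.val ≠ 0)
    (ih : ∀ T : Set (Fin n), (∀ q ∈ T, q.val ≠ 0) → T.ncard < S.ncard → Reachable (insert 0 T)) :
    Reachable (insert 0 S) := by
  rcases S.eq_empty_or_nonempty with rfl | ⟨x, hx⟩
  · simpa using Reachable.zero
  by_cases hfull : ∀ y : Fin n, y.val ≠ 0 → y ∈ S
  · have h1 := val_one_of_two_le (by omega : 2 ≤ n)
    have hsub : {q : Fin n | 2 ≤ q.val} ⊂ S := by
      refine (Set.ssubset_iff_of_subset fun q hq => hfull q ?_).2 ⟨1, hfull 1 (by omega), ?_⟩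
      · simp only [Set.mem_ofPred_eq] at hq; omega
      · simp only [Set.mem_ofPred_eq]; omega
    have huniv : insert 0 S = Set.univ := Set.eq_univ_of_forall fun y => by
      by_cases hy : y.val = 0
      · exact Or.inl (Fin.ext hy)
      · exact Or.inr (hfull y hy)
    rw [huniv, ← stepB_insert_zero_two_le hn]
    exact (ih _ (fun q hq => by simp only [Set.mem_ofPred_eq] at hq; omega)
      (Set.ncard_lt_ncard hsub)).stepB
  push Not at hfull
  obtain ⟨y, hy, hyS⟩ := hfull
  obtain ⟨q, hq, hrq⟩ := exists_mem_rot_notMem hx (hS x hx) hy hyS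
  exact reachable_insert_zero_of_rot_notMem hn hS hq hrq ih

theorem reachable_insert_zero (hn : 3 ≤ n) {S : Set (Fin n)} (hS : ∀ q ∈ S, q.val ≠ 0) :
    Reachable (insert 0 S) := by
  induction h : S.ncard using Nat.strong_induction_on generalizing S with
  | _ k ih =>
    exact reachable_insert_zero_of_forall_ncard_lt hn hS fun T hT hlt => ih _ (h ▸ hlt) hT rfl

theorem reachable_of_nonempty (hn : 3 ≤ n) {S : Set (Fin n)} (hne : S.Nonempty)
    (hS : ∀ q ∈ S, 1 ≤ q.val ∧ q.val ≤ n - 2) : Reachable S :=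
  reachable_of_nonempty_of_forall_ncard_lt hn hne hS fun _ hT _ => reachable_insert_zero hn hT

structure IsStarNFA (N : NFA (Fin 2) (Option (Fin n))) : Prop where
  none_notMem_step (p : Option (Fin n)) (l : Fin 2) : none ∉ N.step p l
  mem_step_zero (p : Option (Fin n)) (q : Fin n) :
    some q ∈ N.step p 0 ↔
      (p = none ∧ q.val = 0) ∨
      (∃ r : Fin n, p = some r ∧
        ((r.val = 0 ∧ q.val = 0) ∨
         (1 ≤ r.val ∧ r.val ≤ n - 2 ∧ q.val = r.val + 1) ∨
         (r.val = n - 2 ∧ q.val = 0) ∨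
         (r.val = n - 1 ∧ q.val = 1)))
  mem_step_one (p : Option (Fin n)) (q : Fin n) :
    some q ∈ N.step p 1 ↔
      (p = none ∧ q.val = 1) ∨
      (∃ r : Fin n, p = some r ∧
        ((r.val = 0 ∧ q.val = 1) ∨
         (r.val = 1 ∧ q.val = 0) ∨
         (2 ≤ r.val ∧ r.val ≤ n - 2 ∧ q.val = r.val) ∨
         (r.val = n - 1 ∧ (q.val = n - 1 ∨ q.val = 0))))

namespace IsStarNFA

variable {N : NFA (Fin 2) (Option (Fin n))}

lemma step_none_zero (hN : IsStarNFA N) : N.step none 0 = {some 0} := by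
  ext (_ | q)
  · simpa using hN.none_notMem_step none 0
  · rw [hN.mem_step_zero, Set.mem_singleton_iff, Option.some_inj, Fin.ext_iff, Fin.val_zero]
    simp

lemma stepSet_image_some (hN : IsStarNFA N) (l : Fin 2) (X : Set (Fin n)) :
    N.stepSet (some '' X) l = some '' {q | ∃ r ∈ X, some q ∈ N.step (some r) l} := by
  ext (_ | q)
  · simpa [NFA.mem_stepSet] using fun r _ => hN.none_notMem_step (some r) l
  · simp [NFA.mem_stepSet]

lemma stepSet_image_some_zero (hN : IsStarNFA N) (X : Set (Fin n)) :
    N.stepSet (some '' X) 0 = some '' stepA X := by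
  rw [hN.stepSet_image_some]
  congr 1
  ext q
  simp [mem_stepA_iff, hN.mem_step_zero]

lemma stepSet_image_some_one (hN : IsStarNFA N) (hn : 3 ≤ n) (X : Set (Fin n)) :
    N.stepSet (some '' X) 1 = some '' stepB X := by
  rw [hN.stepSet_image_some]
  congr 1
  ext q
  simp [mem_stepB_iff hn, hN.mem_step_one]

theorem exists_eval_eq (hN : IsStarNFA N) (hn : 3 ≤ n) (hstart : N.start = {none})
    {X : Set (Fin n)} (h : Reachable X) : ∃ w, N.toDFA.eval w = some '' X := by
  induction h with
  | zero =>
    refine ⟨[0], ?_⟩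
    rw [← List.nil_append [0], DFA.eval_append_singleton, DFA.eval_nil, Set.image_singleton]
    exact (congrArg (N.stepSet · 0) hstart).trans
      ((N.stepSet_singleton none 0).trans hN.step_none_zero)
  | stepA _ ih =>
    obtain ⟨w, hw⟩ := ih
    exact ⟨w ++ [0], by rw [DFA.eval_append_singleton, hw]; exact hN.stepSet_image_some_zero _⟩
  | stepB _ ih =>
    obtain ⟨w, hw⟩ := ih
    exact ⟨w ++ [1], by rw [DFA.eval_append_singleton, hw]; exact hN.stepSet_image_some_one hn _⟩

end IsStarNFA

end StarSubsetAutomaton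

/-- Reachability in the subset automaton for `L_n∗`. Fix `n ≥ 3` and the NFA over
`{a,b}` (encoded as `Fin 2`, `a = 0`, `b = 1`) with states `{s, 0, 1, …, n−1}`
(encoded as `Option (Fin n)` with `s = none`), initial state `s`, where
`a` acts on `{0,…,n−1}` as the cycle `(1,…,n−1)` fixing `0`, plus `s →ᵃ 0` and
`(n−2) →ᵃ 0`; and `b` acts as the transposition `(0,1)`, plus `s →ᵇ 1` and
`(n−1) →ᵇ 0`. Then in the determinization (`N.toDFA`), every subset `{0} ∪ S` with
`S ⊆ {1,…,n−1}` is reachable from the initial subset, and every nonempty subset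
`S ⊆ {1,…,n−2}` is reachable. -/
theorem subset_automaton_reachability (n : ℕ) (hn : 3 ≤ n) (N : NFA (Fin 2) (Option (Fin n)))
    (hstart : N.start = {none})
    (hnone : ∀ (p : Option (Fin n)) (l : Fin 2), none ∉ N.step p l)
    (hstepa : ∀ (p : Option (Fin n)) (q : Fin n),
      some q ∈ N.step p 0 ↔
        (p = none ∧ q.val = 0) ∨
        (∃ r : Fin n, p = some r ∧
          ((r.val = 0 ∧ q.val = 0) ∨
           (1 ≤ r.val ∧ r.val ≤ n - 2 ∧ q.val = r.val + 1) ∨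
           (r.val = n - 2 ∧ q.val = 0) ∨
           (r.val = n - 1 ∧ q.val = 1))))
    (hstepb : ∀ (p : Option (Fin n)) (q : Fin n),
      some q ∈ N.step p 1 ↔
        (p = none ∧ q.val = 1) ∨
        (∃ r : Fin n, p = some r ∧
          ((r.val = 0 ∧ q.val = 1) ∨
           (r.val = 1 ∧ q.val = 0) ∨
           (2 ≤ r.val ∧ r.val ≤ n - 2 ∧ q.val = r.val) ∨
           (r.val = n - 1 ∧ (q.val = n - 1 ∨ q.val = 0))))) :
    (∀ S : Set (Fin n), (∀ q ∈ S, q.val ≠ 0) →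
      ∃ w : List (Fin 2),
        N.toDFA.eval w = insert (some (⟨0, by omega⟩ : Fin n)) (Option.some '' S)) ∧
    (∀ S : Set (Fin n), S.Nonempty → (∀ q ∈ S, 1 ≤ q.val ∧ q.val ≤ n - 2) →
      ∃ w : List (Fin 2), N.toDFA.eval w = Option.some '' S) := by
  have : NeZero n := ⟨by omega⟩
  have hN : StarSubsetAutomaton.IsStarNFA N := ⟨hnone, hstepa, hstepb⟩
  refine ⟨fun S hS => ?_, fun S hne hS =>
    hN.exists_eval_eq hn hstart (StarSubsetAutomaton.reachable_of_nonempty hn hne hS)⟩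
  obtain ⟨w, hw⟩ := hN.exists_eval_eq hn hstart (StarSubsetAutomaton.reachable_insert_zero hn hS)
  exact ⟨w, by rw [hw, Set.image_insert_eq]; rfl⟩
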